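/- arXiv:1502.04251 — 5 statements merged into one kernel-verified Lean document; each statement's English description precedes it below -/
import Mathlib

section
/- Let α₁,α₂,α₃,α₄ be the roots of g(x)=3x⁴+b₂x³+3b₄x²+3b₆x+b₈ in an algebraically closed field of characteristic ≠ 2,3, where b₂,b₄,b₆,b₈,Δ are the standard quantities attached to Weierstrass coefficients. Then each of b₄−3(α₁α₂+α₃α₄), b₄−3(α₁α₃+α₂α₄), b₄−3(α₁α₄+α₂α₃) is a cube root of Δ. -/
/-!
Comparing coefficients of `g(x) = 3 ∏ (x - αᵢ)` expresses `b₂, b₄, b₆, b₈` through the elementary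
symmetric functions of the roots. Substituting these, `(b₄ - 3(α₁α₂ + α₃α₄))³ - Δ` becomes
`9 (α₁ + α₂)(α₃ + α₄)` times `4b₈ - b₂b₆ + b₄²`, which vanishes identically in the `aᵢ`.
The other two pairings follow by permuting the roots.
-/

section

variable {R : Type*} [CommRing R] [IsDomain R]

/-- The coefficients are read off from the values at `0, ±1, 2`. -/
theorem vieta_of_forall_quartic_eq (h2 : (2 : R) ≠ 0) (h3 : (3 : R) ≠ 0)
    {b₂ b₄ b₆ b₈ α₁ α₂ α₃ α₄ : R}
    (h : ∀ x : R, 3 * x ^ 4 + b₂ * x ^ 3 + 3 * b₄ * x ^ 2 + 3 * b₆ * x + b₈ =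
      3 * (x - α₁) * (x - α₂) * (x - α₃) * (x - α₄)) :
    b₂ = -3 * (α₁ + α₂ + α₃ + α₄) ∧
    b₄ = α₁ * α₂ + α₁ * α₃ + α₁ * α₄ + α₂ * α₃ + α₂ * α₄ + α₃ * α₄ ∧
    b₆ = -(α₁ * α₂ * α₃ + α₁ * α₂ * α₄ + α₁ * α₃ * α₄ + α₂ * α₃ * α₄) ∧
    b₈ = 3 * (α₁ * α₂ * α₃ * α₄) := by
  have h6 : (6 : R) ≠ 0 := by
    simpa only [show (6 : R) = 2 * 3 by norm_num] using mul_ne_zero h2 h3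
  have h18 : (18 : R) ≠ 0 := by
    simpa only [show (18 : R) = 3 * 6 by norm_num] using mul_ne_zero h3 h6
  refine ⟨mul_left_cancel₀ h6 ?_, mul_left_cancel₀ h6 ?_, mul_left_cancel₀ h18 ?_, ?_⟩
  · linear_combination h 2 + 3 * h 0 - 3 * h 1 - h (-1)
  · linear_combination h 1 + h (-1) - 2 * h 0
  · linear_combination 6 * h 1 - 2 * h (-1) - h 2 - 3 * h 0
  · linear_combination h 0

theorem WeierstrassCurve.b₄_sub_three_mul_pairing_pow_three (W : WeierstrassCurve R)
    (h2 : (2 : R) ≠ 0) (h3 : (3 : R) ≠ 0) {α₁ α₂ α₃ α₄ : R}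
    (h : ∀ x : R, 3 * x ^ 4 + W.b₂ * x ^ 3 + 3 * W.b₄ * x ^ 2 + 3 * W.b₆ * x + W.b₈ =
      3 * (x - α₁) * (x - α₂) * (x - α₃) * (x - α₄)) :
    (W.b₄ - 3 * (α₁ * α₂ + α₃ * α₄)) ^ 3 = W.Δ := by
  obtain ⟨hb₂, hb₄, hb₆, hb₈⟩ := vieta_of_forall_quartic_eq h2 h3 h
  have hrel := W.b_relation
  rw [hb₂, hb₄, hb₆, hb₈] at hrel
  rw [WeierstrassCurve.Δ, hb₂, hb₄, hb₆, hb₈]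
  linear_combination (9 * (α₁ + α₂) * (α₃ + α₄)) * hrel

end

theorem cube_roots_of_Delta_general (F : Type*) [Field F]
    (h2 : (2 : F) ≠ 0) (h3 : (3 : F) ≠ 0)
    (a₁ a₂ a₃ a₄ a₆ b₂ b₄ b₆ b₈ Δ α₁ α₂ α₃ α₄ : F)
    (hb₂ : b₂ = a₁ ^ 2 + 4 * a₂)
    (hb₄ : b₄ = a₁ * a₃ + 2 * a₄)
    (hb₆ : b₆ = a₃ ^ 2 + 4 * a₆)
    (hb₈ : b₈ = a₁ ^ 2 * a₆ - a₁ * a₃ * a₄ + 4 * a₂ * a₆ + a₂ * a₃ ^ 2 - a₄ ^ 2)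
    (hΔ : Δ = -b₂ ^ 2 * b₈ - 8 * b₄ ^ 3 - 27 * b₆ ^ 2 + 9 * b₂ * b₄ * b₆)
    (hroots : ∀ x : F, 3 * x ^ 4 + b₂ * x ^ 3 + 3 * b₄ * x ^ 2 + 3 * b₆ * x + b₈ =
      3 * (x - α₁) * (x - α₂) * (x - α₃) * (x - α₄)) :
    (b₄ - 3 * (α₁ * α₂ + α₃ * α₄)) ^ 3 = Δ ∧
    (b₄ - 3 * (α₁ * α₃ + α₂ * α₄)) ^ 3 = Δ ∧
    (b₄ - 3 * (α₁ * α₄ + α₂ * α₃)) ^ 3 = Δ := by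
  let W : WeierstrassCurve F := ⟨a₁, a₂, a₃, a₄, a₆⟩
  have hW : W.b₂ = b₂ ∧ W.b₄ = b₄ ∧ W.b₆ = b₆ ∧ W.b₈ = b₈ := by
    refine ⟨hb₂.symm, ?_, hb₆.symm, ?_⟩
    · rw [hb₄, WeierstrassCurve.b₄]; ring
    · rw [hb₈, WeierstrassCurve.b₈]; ring
  obtain ⟨rfl, rfl, rfl, rfl⟩ := hW
  replace hΔ : Δ = W.Δ := hΔ
  subst hΔ
  exact ⟨W.b₄_sub_three_mul_pairing_pow_three h2 h3 hroots,
    W.b₄_sub_three_mul_pairing_pow_three h2 h3 (α₂ := α₃) (α₃ := α₂)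
      fun x => (hroots x).trans (by ring),
    W.b₄_sub_three_mul_pairing_pow_three h2 h3 (α₂ := α₄) (α₃ := α₂) (α₄ := α₃)
      fun x => (hroots x).trans (by ring)⟩

/-- Over an algebraically closed field of characteristic `≠ 2, 3`, let `α₁, α₂, α₃, α₄` be the
roots (with multiplicity) of `g(x) = 3x⁴ + b₂x³ + 3b₄x² + 3b₆x + b₈`, where `b₂, b₄, b₆, b₈, Δ`
are the standard quantities attached to Weierstrass coefficients `a₁, …, a₆`. Then each of
`b₄ − 3(α₁α₂ + α₃α₄)`, `b₄ − 3(α₁α₃ + α₂α₄)`, `b₄ − 3(α₁α₄ + α₂α₃)` is a cube root of `Δ`. -/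
theorem cube_roots_of_Delta (F : Type*) [Field F] [IsAlgClosed F]
    (h2 : (2 : F) ≠ 0) (h3 : (3 : F) ≠ 0)
    (a₁ a₂ a₃ a₄ a₆ b₂ b₄ b₆ b₈ Δ α₁ α₂ α₃ α₄ : F)
    (hb₂ : b₂ = a₁ ^ 2 + 4 * a₂)
    (hb₄ : b₄ = a₁ * a₃ + 2 * a₄)
    (hb₆ : b₆ = a₃ ^ 2 + 4 * a₆)
    (hb₈ : b₈ = a₁ ^ 2 * a₆ - a₁ * a₃ * a₄ + 4 * a₂ * a₆ + a₂ * a₃ ^ 2 - a₄ ^ 2)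
    (hΔ : Δ = -b₂ ^ 2 * b₈ - 8 * b₄ ^ 3 - 27 * b₆ ^ 2 + 9 * b₂ * b₄ * b₆)
    (hroots : ∀ x : F, 3 * x ^ 4 + b₂ * x ^ 3 + 3 * b₄ * x ^ 2 + 3 * b₆ * x + b₈ =
      3 * (x - α₁) * (x - α₂) * (x - α₃) * (x - α₄)) :
    (b₄ - 3 * (α₁ * α₂ + α₃ * α₄)) ^ 3 = Δ ∧
    (b₄ - 3 * (α₁ * α₃ + α₂ * α₄)) ^ 3 = Δ ∧
    (b₄ - 3 * (α₁ * α₄ + α₂ * α₃)) ^ 3 = Δ :=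
  cube_roots_of_Delta_general F h2 h3 a₁ a₂ a₃ a₄ a₆ b₂ b₄ b₆ b₈ Δ α₁ α₂ α₃ α₄ hb₂ hb₄ hb₆ hb₈ hΔ
    hroots
end

section
/- With notation as in the 3-division polynomial setting, if Δ^{1/3} = b₄ − 3(α₁α₂ + α₃α₄), s = α₁+α₂, t = α₁α₂, then g(x) = (x² − sx + t)(3x² + (3s + b₂)x − (3t + Δ^{1/3} − b₄)). -/
theorem quadratic_cofactor_eq {R : Type*} [CommRing R] (b₂ b₄ δ s t α₁ α₂ α₃ α₄ x : R)
    (hb₂ : b₂ = -3 * (α₁ + α₂ + α₃ + α₄)) (hδ : δ = b₄ - 3 * (α₁ * α₂ + α₃ * α₄))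
    (hs : s = α₁ + α₂) (ht : t = α₁ * α₂) :
    3 * x ^ 2 + (3 * s + b₂) * x - (3 * t + δ - b₄) = 3 * (x - α₃) * (x - α₄) := by
  subst hb₂ hδ hs ht
  ring

theorem g_factorization_general (F : Type*) [Field F]
    (b₂ b₄ b₆ b₈ δ s t α₁ α₂ α₃ α₄ : F)
    (hb₂ : b₂ = -3 * (α₁ + α₂ + α₃ + α₄))
    (hroots : ∀ x : F, 3 * x ^ 4 + b₂ * x ^ 3 + 3 * b₄ * x ^ 2 + 3 * b₆ * x + b₈ =
      3 * (x - α₁) * (x - α₂) * (x - α₃) * (x - α₄))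
    (hδ : δ = b₄ - 3 * (α₁ * α₂ + α₃ * α₄))
    (hs : s = α₁ + α₂) (ht : t = α₁ * α₂) :
    ∀ x : F, 3 * x ^ 4 + b₂ * x ^ 3 + 3 * b₄ * x ^ 2 + 3 * b₆ * x + b₈ =
      (x ^ 2 - s * x + t) * (3 * x ^ 2 + (3 * s + b₂) * x - (3 * t + δ - b₄)) := by
  intro x
  rw [hroots x, quadratic_cofactor_eq b₂ b₄ δ s t α₁ α₂ α₃ α₄ x hb₂ hδ hs ht, hs, ht]
  ring

/-- In a field of characteristic `≠ 2, 3`, let `g(x) = 3x⁴ + b₂x³ + 3b₄x² + 3b₆x + b₈` have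
roots `α₁, α₂, α₃, α₄` (so in particular `b₂ = −3(α₁+α₂+α₃+α₄)`). If
`Δ^{1/3} = b₄ − 3(α₁α₂ + α₃α₄)`, `s = α₁ + α₂` and `t = α₁α₂`, then
`g(x) = (x² − sx + t)(3x² + (3s + b₂)x − (3t + Δ^{1/3} − b₄))`. -/
theorem g_factorization (F : Type*) [Field F] (h2 : (2 : F) ≠ 0) (h3 : (3 : F) ≠ 0)
    (b₂ b₄ b₆ b₈ δ s t α₁ α₂ α₃ α₄ : F)
    (hb₂ : b₂ = -3 * (α₁ + α₂ + α₃ + α₄))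
    (hroots : ∀ x : F, 3 * x ^ 4 + b₂ * x ^ 3 + 3 * b₄ * x ^ 2 + 3 * b₆ * x + b₈ =
      3 * (x - α₁) * (x - α₂) * (x - α₃) * (x - α₄))
    (hδ : δ = b₄ - 3 * (α₁ * α₂ + α₃ * α₄))
    (hs : s = α₁ + α₂) (ht : t = α₁ * α₂) :
    ∀ x : F, 3 * x ^ 4 + b₂ * x ^ 3 + 3 * b₄ * x ^ 2 + 3 * b₆ * x + b₈ =
      (x ^ 2 - s * x + t) * (3 * x ^ 2 + (3 * s + b₂) * x - (3 * t + δ - b₄)) :=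
  g_factorization_general F b₂ b₄ b₆ b₈ δ s t α₁ α₂ α₃ α₄ hb₂ hroots hδ hs ht
end

section
/- The discriminant of the quartic g(x) = 3x⁴ + b₂x³ + 3b₄x² + 3b₆x + b₈ equals −27Δ², where Δ is the discriminant of the associated Weierstrass equation. Concretely, 3⁶ · ∏_{1≤i<j≤4} (αᵢ−αⱼ)² = −27Δ² where αᵢ are the roots of g. -/
/-!
The roots determine the coefficients of `g` (Vieta), and the discriminant of any quartic
`a x⁴ + b x³ + c x² + d x + e` is `(4 I³ - J²) / 27` in terms of its classical invariants `I`, `J`.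
For `g` the relation `4 b₈ = b₂ b₆ - b₄²` of the Weierstrass quantities makes `I` vanish and
turns `J` into `27 Δ`, so the discriminant is `-(27 Δ)² / 27 = -27 Δ²`.
-/

section QuarticInvariants

variable {R : Type*} [CommRing R]

def quarticInvariantI (a b c d e : R) : R :=
  12 * a * e - 3 * b * d + c ^ 2

def quarticInvariantJ (a b c d e : R) : R :=
  72 * a * c * e + 9 * b * c * d - 27 * a * d ^ 2 - 27 * e * b ^ 2 - 2 * c ^ 3

theorem twentySeven_mul_quartic_discr {a b c d e α₁ α₂ α₃ α₄ : R}
    (hb : b = -a * (α₁ + α₂ + α₃ + α₄))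
    (hc : c = a * (α₁ * α₂ + α₁ * α₃ + α₁ * α₄ + α₂ * α₃ + α₂ * α₄ + α₃ * α₄))
    (hd : d = -a * (α₁ * α₂ * α₃ + α₁ * α₂ * α₄ + α₁ * α₃ * α₄ + α₂ * α₃ * α₄))
    (he : e = a * (α₁ * α₂ * α₃ * α₄)) :
    27 * (a ^ 6 * ((α₁ - α₂) ^ 2 * (α₁ - α₃) ^ 2 * (α₁ - α₄) ^ 2 * (α₂ - α₃) ^ 2 *
        (α₂ - α₄) ^ 2 * (α₃ - α₄) ^ 2)) =
      4 * quarticInvariantI a b c d e ^ 3 - quarticInvariantJ a b c d e ^ 2 := by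
  subst hb hc hd he
  unfold quarticInvariantI quarticInvariantJ
  ring

end QuarticInvariants

theorem cubic_coeffs_eq_zero_of_forall_eval_eq_zero {F : Type*} [Field F]
    (h2 : (2 : F) ≠ 0) (h3 : (3 : F) ≠ 0) {p q r s : F}
    (h : ∀ x : F, p * x ^ 3 + q * x ^ 2 + r * x + s = 0) :
    p = 0 ∧ q = 0 ∧ r = 0 ∧ s = 0 := by
  have hs : s = 0 := by linear_combination h 0
  have hq : q = 0 := by
    refine (mul_eq_zero.mp ?_).resolve_left h2
    linear_combination h 1 + h (-1) - 2 * h 0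
  have hp : p = 0 := by
    refine (mul_eq_zero.mp ?_).resolve_left (mul_ne_zero h2 h3)
    linear_combination h 2 - 3 * h 1 - h (-1) + 3 * h 0
  refine ⟨hp, hq, ?_, hs⟩
  linear_combination h 1 - h 0 - hp - hq

theorem discriminant_of_g_general (F : Type*) [Field F]
    (h2 : (2 : F) ≠ 0) (h3 : (3 : F) ≠ 0)
    (a₁ a₂ a₃ a₄ a₆ b₂ b₄ b₆ b₈ Δ α₁ α₂ α₃ α₄ : F)
    (hb₂ : b₂ = a₁ ^ 2 + 4 * a₂)
    (hb₄ : b₄ = a₁ * a₃ + 2 * a₄)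
    (hb₆ : b₆ = a₃ ^ 2 + 4 * a₆)
    (hb₈ : b₈ = a₁ ^ 2 * a₆ - a₁ * a₃ * a₄ + 4 * a₂ * a₆ + a₂ * a₃ ^ 2 - a₄ ^ 2)
    (hΔ : Δ = -b₂ ^ 2 * b₈ - 8 * b₄ ^ 3 - 27 * b₆ ^ 2 + 9 * b₂ * b₄ * b₆)
    (hroots : ∀ x : F, 3 * x ^ 4 + b₂ * x ^ 3 + 3 * b₄ * x ^ 2 + 3 * b₆ * x + b₈ =
      3 * (x - α₁) * (x - α₂) * (x - α₃) * (x - α₄)) :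
    3 ^ 6 * ((α₁ - α₂) ^ 2 * (α₁ - α₃) ^ 2 * (α₁ - α₄) ^ 2 * (α₂ - α₃) ^ 2 * (α₂ - α₄) ^ 2 *
        (α₃ - α₄) ^ 2) = -27 * Δ ^ 2 := by
  obtain ⟨vieta₂, vieta₄, vieta₆, vieta₈⟩ := cubic_coeffs_eq_zero_of_forall_eval_eq_zero h2 h3
    (p := b₂ + 3 * (α₁ + α₂ + α₃ + α₄))
    (q := 3 * b₄ - 3 * (α₁ * α₂ + α₁ * α₃ + α₁ * α₄ + α₂ * α₃ + α₂ * α₄ + α₃ * α₄))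
    (r := 3 * b₆ + 3 * (α₁ * α₂ * α₃ + α₁ * α₂ * α₄ + α₁ * α₃ * α₄ + α₂ * α₃ * α₄))
    (s := b₈ - 3 * (α₁ * α₂ * α₃ * α₄)) fun x => by linear_combination hroots x
  have hdisc := twentySeven_mul_quartic_discr (a := (3 : F)) (b := b₂) (c := 3 * b₄)
    (d := 3 * b₆) (e := b₈) (α₁ := α₁) (α₂ := α₂) (α₃ := α₃) (α₄ := α₄)
    (by linear_combination vieta₂) (by linear_combination vieta₄)
    (by linear_combination vieta₆) (by linear_combination vieta₈)
  have b_relation : 4 * b₈ = b₂ * b₆ - b₄ ^ 2 := by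
    rw [hb₂, hb₄, hb₆, hb₈]
    ring
  have hI : quarticInvariantI 3 b₂ (3 * b₄) (3 * b₆) b₈ = 0 := by
    unfold quarticInvariantI
    linear_combination 9 * b_relation
  have hJ : quarticInvariantJ 3 b₂ (3 * b₄) (3 * b₆) b₈ = 27 * Δ := by
    unfold quarticInvariantJ
    linear_combination 162 * b₄ * b_relation - 27 * hΔ
  rw [hI, hJ] at hdisc
  have h27 : (27 : F) ≠ 0 := by
    have := pow_ne_zero 3 h3
    norm_num at this
    exact this
  exact mul_left_cancel₀ h27 (by linear_combination hdisc)

/-- Over an algebraically closed field of characteristic `≠ 2, 3`, with Weierstrass coefficients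
`a₁, …, a₆` and standard derived quantities `b₂, b₄, b₆, b₈, Δ`, if `α₁, α₂, α₃, α₄` are the roots
of `g(x) = 3x⁴ + b₂x³ + 3b₄x² + 3b₆x + b₈`, then
`3⁶ · ∏_{1 ≤ i < j ≤ 4} (αᵢ − αⱼ)² = −27Δ²`, i.e. the discriminant of `g` equals `−27Δ²`. -/
theorem discriminant_of_g (F : Type*) [Field F] [IsAlgClosed F]
    (h2 : (2 : F) ≠ 0) (h3 : (3 : F) ≠ 0)
    (a₁ a₂ a₃ a₄ a₆ b₂ b₄ b₆ b₈ Δ α₁ α₂ α₃ α₄ : F)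
    (hb₂ : b₂ = a₁ ^ 2 + 4 * a₂)
    (hb₄ : b₄ = a₁ * a₃ + 2 * a₄)
    (hb₆ : b₆ = a₃ ^ 2 + 4 * a₆)
    (hb₈ : b₈ = a₁ ^ 2 * a₆ - a₁ * a₃ * a₄ + 4 * a₂ * a₆ + a₂ * a₃ ^ 2 - a₄ ^ 2)
    (hΔ : Δ = -b₂ ^ 2 * b₈ - 8 * b₄ ^ 3 - 27 * b₆ ^ 2 + 9 * b₂ * b₄ * b₆)
    (hroots : ∀ x : F, 3 * x ^ 4 + b₂ * x ^ 3 + 3 * b₄ * x ^ 2 + 3 * b₆ * x + b₈ =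
      3 * (x - α₁) * (x - α₂) * (x - α₃) * (x - α₄)) :
    3 ^ 6 * ((α₁ - α₂) ^ 2 * (α₁ - α₃) ^ 2 * (α₁ - α₄) ^ 2 * (α₂ - α₃) ^ 2 * (α₂ - α₄) ^ 2 *
        (α₃ - α₄) ^ 2) = -27 * Δ ^ 2 :=
  discriminant_of_g_general F h2 h3 a₁ a₂ a₃ a₄ a₆ b₂ b₄ b₆ b₈ Δ α₁ α₂ α₃ α₄ hb₂ hb₄ hb₆ hb₈ hΔ
    hroots
end

section
/- Let 𝓔 be the elliptic curve over F₂ defined by y² + y = x³. Then for every positive integer m, the number of F_{2^m}-rational points of 𝓔 (including the point at infinity) equals 2^m + 1 − (√2 i)^m − (−√2 i)^m. In particular, for m even this is 2^m + 1 − 2·(−2)^{m/2}, and for m odd it is 2^m + 1. -/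
/-!
Let `ψ` be the additive character of `F = 𝔽_{2^m}` that is `1` exactly on the image `V` of the
Artin–Schreier map `y ↦ y² + y`, a subgroup of index two. Every point of `V` has exactly two
preimages, so the number of affine points is `Σₓ (1 + ψ(x³)) = q + S` with `S = Σₓ ψ(x³)`.

Since `ψ(z²) = ψ(z)`, the substitution `z = x + u` turns `S²` into
`Σᵤ ψ(u³) Σₓ ψ((u⁴ + u) x²)`, so only the `u` with `u⁴ = u` survive and
`S² = 2q(1 + ψ(1))`. Now `ψ(1) = 1` iff `F` contains a primitive cube root of unity, iff `m`
is even. For odd `m` this gives `S = 0`; for `m = 2k` it gives `S = ±2·2ᵏ`, and the sign is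
fixed by `S ≡ 1 (mod 3)`, which holds because the nonzero `x` come in triples with equal cubes.
-/

open Finset WeierstrassCurve

section CubeRoots

variable {F : Type*} [Field F] [Fintype F] [DecidableEq F]

lemma exists_isPrimitiveRoot_iff_dvd_card_sub_one {p : ℕ} [hp : Fact p.Prime] :
    (∃ ζ : F, IsPrimitiveRoot ζ p) ↔ p ∣ Fintype.card F - 1 := by
  rw [← Fintype.card_units]
  constructor
  · rintro ⟨ζ, hζ⟩
    obtain ⟨u, rfl⟩ := hζ.isUnit hp.out.ne_zero
    rw [IsPrimitiveRoot.coe_units_iff, IsPrimitiveRoot.iff_orderOf] at hζ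
    exact hζ ▸ orderOf_dvd_card
  · intro h
    obtain ⟨u, hu⟩ := exists_prime_orderOf_dvd_card p h
    exact ⟨u, IsPrimitiveRoot.coe_units_iff.2 (IsPrimitiveRoot.iff_orderOf.2 hu)⟩

lemma card_filter_pow_three_eq {ω : F} (hω : IsPrimitiveRoot ω 3) {a : F} (ha : a ≠ 0) :
    #{x | x ^ 3 = a ^ 3} = 3 := by
  have hroots : ({x | x ^ 3 = a ^ 3} : Finset F) = Polynomial.nthRootsFinset 3 (a ^ 3) := by
    ext x
    simp [Polynomial.mem_nthRootsFinset three_pos]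
  rw [hroots, Polynomial.nthRootsFinset_def,
    Multiset.toFinset_card_of_nodup (hω.nthRoots_nodup (pow_ne_zero 3 ha)), hω.card_nthRoots,
    if_pos ⟨a, rfl⟩]

lemma sum_pow_three_modEq {ω : F} (hω : IsPrimitiveRoot ω 3) (f : F → ℤ) :
    ∑ x, f (x ^ 3) ≡ f 0 [ZMOD 3] := by
  have hfiber (c : F) (hc : c ∈ (univ.erase 0).image (· ^ 3)) :
      #{x ∈ univ.erase 0 | x ^ 3 = c} = 3 := by
    obtain ⟨a, ha, rfl⟩ := mem_image.1 hc
    have ha0 : a ≠ 0 := ne_of_mem_erase ha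
    refine (congrArg card ?_).trans (card_filter_pow_three_eq hω ha0)
    ext x
    simp only [mem_filter, mem_erase, mem_univ, and_true, true_and]
    refine ⟨And.right, fun h => ⟨?_, h⟩⟩
    rintro rfl
    exact pow_ne_zero 3 ha0 (by simpa using h.symm)
  rw [← add_sum_erase _ _ (mem_univ 0), zero_pow three_ne_zero, sum_comp,
    sum_congr rfl fun c hc => by rw [hfiber c hc], ← smul_sum, nsmul_eq_mul, Nat.cast_ofNat]
  exact Int.add_mul_emod_self_left _ _ _

end CubeRoots

def traceOfFrobenius (m : ℕ) : ℤ := if Even m then 2 * (-2) ^ (m / 2) else 0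

lemma sqrt_two_mul_I_pow_add_neg_pow (m : ℕ) :
    (Real.sqrt 2 * Complex.I) ^ m + (-(Real.sqrt 2 * Complex.I)) ^ m = traceOfFrobenius m := by
  have hsq : ((Real.sqrt 2 : ℂ) * Complex.I) ^ 2 = -2 := by
    rw [mul_pow, ← Complex.ofReal_pow, Real.sq_sqrt zero_le_two, Complex.I_sq]
    norm_num
  rw [traceOfFrobenius]
  rcases Nat.even_or_odd' m with ⟨k, rfl | rfl⟩
  · rw [if_pos (even_two_mul k), (even_two_mul k).neg_pow, pow_mul, hsq,
      Nat.mul_div_cancel_left k two_pos]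
    push_cast
    ring
  · rw [if_neg (Nat.not_even_iff_odd.2 (odd_two_mul_add_one k)), (odd_two_mul_add_one k).neg_pow]
    simp

lemma three_dvd_two_pow_sub_one_iff {m : ℕ} : 3 ∣ 2 ^ m - 1 ↔ Even m := by
  rw [← ZMod.natCast_eq_zero_iff, Nat.cast_sub Nat.one_le_two_pow, sub_eq_zero, Nat.cast_pow,
    show ((2 : ℕ) : ZMod 3) = -1 from rfl, Nat.cast_one, neg_one_pow_eq_one_iff_even (by decide)]

section ArtinSchreier

variable (F : Type*) [Field F] [CharP F 2]

def artinSchreier : F →+ F where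
  toFun y := y ^ 2 + y
  map_zero' := by simp
  map_add' a b := by rw [CharTwo.add_sq]; ring

variable {F}

@[simp]
lemma artinSchreier_apply (y : F) : artinSchreier F y = y ^ 2 + y := rfl

lemma sq_add_self_eq_sq_add_self_iff {y z : F} :
    y ^ 2 + y = z ^ 2 + z ↔ y = z ∨ y = z + 1 := by
  have h2 : (2 : F) = 0 := CharTwo.two_eq_zero
  constructor
  · intro h
    have : (y + z) * (y + z + 1) = 0 := by linear_combination h + (z ^ 2 + z + y * z) * h2
    rcases mul_eq_zero.1 this with h | h
    · left; linear_combination h - z * h2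
    · right; linear_combination h - (z + 1) * h2
  · rintro (rfl | rfl)
    · rfl
    · linear_combination (z + 1) * h2

lemma isPrimitiveRoot_three_iff {ω : F} : IsPrimitiveRoot ω 3 ↔ ω ^ 2 + ω = 1 := by
  have h2 : (2 : F) = 0 := CharTwo.two_eq_zero
  have hfactor : ω ^ 3 - 1 = (ω - 1) * (ω ^ 2 + ω + 1) := by ring
  rw [IsPrimitiveRoot.iff_orderOf, orderOf_eq_prime_iff, ← sub_eq_zero, hfactor,
    ← CharTwo.add_eq_zero (b := (1 : F))]
  constructor
  · rintro ⟨h, h1⟩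
    exact (mul_eq_zero.1 h).resolve_left (sub_ne_zero.2 h1)
  · intro h
    refine ⟨by rw [h, mul_zero], fun h1 => ?_⟩
    rw [h1] at h
    exact one_ne_zero (by linear_combination h - h2)

variable [Fintype F] [DecidableEq F]

lemma card_filter_sq_add_self_eq_sq_add_self (z : F) : #{y | y ^ 2 + y = z ^ 2 + z} = 2 := by
  have hfiber : ({y | y ^ 2 + y = z ^ 2 + z} : Finset F) = {z, z + 1} := by
    ext y
    simp [sq_add_self_eq_sq_add_self_iff]
  rw [hfiber, card_pair (by simp)]

lemma index_range_artinSchreier : (artinSchreier F).range.index = 2 := by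
  rw [AddSubgroup.index_range, ← card_filter_sq_add_self_eq_sq_add_self (0 : F),
    ← Nat.card_eq_finsetCard]
  simp [AddMonoidHom.mem_ker]

lemma one_mem_range_artinSchreier_iff :
    1 ∈ (artinSchreier F).range ↔ 3 ∣ Fintype.card F - 1 := by
  simp only [AddMonoidHom.mem_range, artinSchreier_apply, ← isPrimitiveRoot_three_iff]
  exact exists_isPrimitiveRoot_iff_dvd_card_sub_one

variable (F) in
def artinSchreierChar : AddChar F ℤ where
  toFun c := if c ∈ (artinSchreier F).range then 1 else -1
  map_zero_eq_one' := by simp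
  map_add_eq_mul' a b := by
    simp only [AddSubgroup.add_mem_iff_of_index_two index_range_artinSchreier]
    split_ifs <;> simp_all

local notation "ψ" => artinSchreierChar F

lemma artinSchreierChar_apply (c : F) :
    ψ c = if c ∈ (artinSchreier F).range then 1 else -1 := rfl

lemma artinSchreierChar_one : ψ 1 = if 3 ∣ Fintype.card F - 1 then 1 else -1 := by
  simp only [artinSchreierChar_apply, one_mem_range_artinSchreier_iff]

lemma artinSchreierChar_sq_add_self (y : F) : ψ (y ^ 2 + y) = 1 := by
  simp [artinSchreierChar_apply]

lemma artinSchreierChar_mul_self (c : F) : ψ c * ψ c = 1 := by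
  rw [← AddChar.map_add_eq_mul, CharTwo.add_self_eq_zero, AddChar.map_zero_eq_one]

lemma artinSchreierChar_sq (z : F) : ψ (z ^ 2) = ψ z := by
  have h := artinSchreierChar_sq_add_self z
  rw [AddChar.map_add_eq_mul] at h
  calc ψ (z ^ 2) = ψ (z ^ 2) * (ψ z * ψ z) := by rw [artinSchreierChar_mul_self, mul_one]
    _ = ψ z := by rw [← mul_assoc, h, one_mul]

lemma artinSchreierChar_ne_one : ψ ≠ 1 := by
  intro h
  have htop : (artinSchreier F).range = ⊤ := by
    refine eq_top_iff.2 fun c _ => ?_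
    by_contra hc
    have := DFunLike.congr_fun h c
    simp [artinSchreierChar_apply, hc] at this
  have := index_range_artinSchreier (F := F)
  rw [htop, AddSubgroup.index_top] at this
  norm_num at this

lemma card_filter_sq_add_self_eq (c : F) : (#{y | y ^ 2 + y = c} : ℤ) = 1 + ψ c := by
  by_cases hc : c ∈ (artinSchreier F).range
  · obtain ⟨z, rfl⟩ := hc
    rw [artinSchreier_apply, card_filter_sq_add_self_eq_sq_add_self,
      artinSchreierChar_sq_add_self]
    norm_num
  · rw [filter_eq_empty_iff.2 fun y _ (hy : y ^ 2 + y = c) => hc ⟨y, hy⟩]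
    simp [artinSchreierChar_apply, hc]

lemma sum_artinSchreierChar_mul_sq_add (u : F) :
    ∑ x, ψ (u * x ^ 2 + u ^ 2 * x) = if u ^ 4 = u then (Fintype.card F : ℤ) else 0 := by
  have hsq : Function.Bijective (fun x : F => x ^ 2) :=
    Finite.injective_iff_bijective.1 CharTwo.sq_injective
  have h (x : F) : ψ (u * x ^ 2 + u ^ 2 * x) = ψ (x ^ 2 * (u ^ 4 + u)) := by
    rw [AddChar.map_add_eq_mul, ← artinSchreierChar_sq (u ^ 2 * x), ← AddChar.map_add_eq_mul]
    ring_nf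
  simp_rw [h]
  rw [Fintype.sum_bijective _ hsq _ (fun y => ψ (y * (u ^ 4 + u))) fun _ => rfl,
    AddChar.sum_mulShift _ (AddChar.IsPrimitive.of_ne_one artinSchreierChar_ne_one)]
  simp [CharTwo.add_eq_zero]

lemma card_filter_pow_four_eq_self : (#{u : F | u ^ 4 = u} : ℤ) = 3 + ψ 1 := by
  have h2 : (2 : F) = 0 := CharTwo.two_eq_zero
  have hsplit : ({u | u ^ 4 = u} : Finset F) =
      ({u | u ^ 2 + u = 0} : Finset F) ∪ ({u | u ^ 2 + u = 1} : Finset F) := by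
    ext u
    simp only [mem_filter, mem_univ, true_and, mem_union]
    rw [← CharTwo.add_eq_zero (a := u ^ 4), ← CharTwo.add_eq_zero (a := u ^ 2 + u) (b := 1),
      ← mul_eq_zero]
    constructor <;> intro h
    · linear_combination h + (u ^ 3 + u ^ 2) * h2
    · linear_combination h - (u ^ 3 + u ^ 2) * h2
  have hdisj : Disjoint ({u | u ^ 2 + u = 0} : Finset F) ({u | u ^ 2 + u = 1} : Finset F) :=
    disjoint_filter.2 fun u _ h0 h1 => zero_ne_one (h0.symm.trans h1)
  rw [hsplit, card_union_of_disjoint hdisj, Nat.cast_add, card_filter_sq_add_self_eq,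
    card_filter_sq_add_self_eq, AddChar.map_zero_eq_one]
  ring

lemma sum_filter_pow_four_eq_self : ∑ u ∈ {u : F | u ^ 4 = u}, ψ (u ^ 3) = 2 * (1 + ψ 1) := by
  have h0 : (0 : F) ∈ ({u | u ^ 4 = u} : Finset F) := by simp
  have h (u : F) (hu : u ∈ ({u | u ^ 4 = u} : Finset F).erase 0) : ψ (u ^ 3) = ψ 1 := by
    obtain ⟨hu0, hu⟩ := mem_erase.1 hu
    have h4 : u ^ 3 * u = 1 * u := by rw [← pow_succ, one_mul]; exact (mem_filter.1 hu).2
    rw [mul_right_cancel₀ hu0 h4]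
  rw [← add_sum_erase _ _ h0, sum_congr rfl h, sum_const, card_erase_of_mem h0, nsmul_eq_mul,
    Nat.cast_pred (card_pos.2 ⟨0, h0⟩), card_filter_pow_four_eq_self, zero_pow three_ne_zero,
    AddChar.map_zero_eq_one]
  linear_combination artinSchreierChar_mul_self (1 : F)

variable (F) in
def cubeSum : ℤ := ∑ x : F, ψ (x ^ 3)

lemma cubeSum_sq : cubeSum F ^ 2 = 2 * Fintype.card F * (1 + ψ 1) := by
  have h2 : (2 : F) = 0 := CharTwo.two_eq_zero
  have hcube (x u : F) :
      ψ (x ^ 3) * ψ ((x + u) ^ 3) = ψ (u ^ 3) * ψ (u * x ^ 2 + u ^ 2 * x) := by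
    rw [← AddChar.map_add_eq_mul, ← AddChar.map_add_eq_mul]
    congr 1
    linear_combination (x ^ 3 + u * x ^ 2 + u ^ 2 * x) * h2
  calc cubeSum F ^ 2 = ∑ x : F, ∑ z : F, ψ (x ^ 3) * ψ (z ^ 3) := by
        rw [sq, cubeSum, sum_mul_sum]
    _ = ∑ x : F, ∑ u : F, ψ (x ^ 3) * ψ ((x + u) ^ 3) :=
        sum_congr rfl fun x _ => (Fintype.sum_equiv (Equiv.addLeft x) _ _ fun _ => rfl).symm
    _ = ∑ u : F, ψ (u ^ 3) * ∑ x : F, ψ (u * x ^ 2 + u ^ 2 * x) := by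
        simp_rw [hcube, mul_sum]
        exact sum_comm
    _ = Fintype.card F * ∑ u ∈ {u : F | u ^ 4 = u}, ψ (u ^ 3) := by
        simp_rw [sum_artinSchreierChar_mul_sq_add, mul_ite, mul_zero, ← sum_filter, mul_sum,
          mul_comm]
    _ = 2 * Fintype.card F * (1 + ψ 1) := by
        rw [sum_filter_pow_four_eq_self]
        ring

lemma cubeSum_modEq_one {ω : F} (hω : IsPrimitiveRoot ω 3) : cubeSum F ≡ 1 [ZMOD 3] := by
  simpa [cubeSum] using sum_pow_three_modEq hω fun c => ψ c

lemma cubeSum_eq_zero (h : ¬ 3 ∣ Fintype.card F - 1) : cubeSum F = 0 := by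
  have hsq := cubeSum_sq (F := F)
  rw [artinSchreierChar_one, if_neg h] at hsq
  exact pow_eq_zero_iff two_ne_zero |>.1 (by simpa using hsq)

lemma cubeSum_eq_of_card_eq_four_pow {k : ℕ} (hq : Fintype.card F = 4 ^ k) :
    cubeSum F = -2 * (-2) ^ k := by
  have h3 : 3 ∣ Fintype.card F - 1 := by
    rw [hq, show 4 ^ k = 2 ^ (2 * k) by rw [pow_mul]; norm_num, three_dvd_two_pow_sub_one_iff]
    exact even_two_mul k
  obtain ⟨ω, hω⟩ := exists_isPrimitiveRoot_iff_dvd_card_sub_one.2 h3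
  have hsq : cubeSum F ^ 2 = (2 * (-2) ^ k) ^ 2 := by
    rw [cubeSum_sq, artinSchreierChar_one, if_pos h3, hq, mul_pow, ← pow_mul, mul_comm k,
      pow_mul]
    push_cast
    ring
  have hS := cubeSum_modEq_one hω
  have hpow : (-2 : ℤ) ^ k ≡ 1 [ZMOD 3] := by
    simpa using (show (-2 : ℤ) ≡ 1 [ZMOD 3] by decide).pow k
  rcases sq_eq_sq_iff_eq_or_eq_neg.1 hsq with h | h
  · unfold Int.ModEq at hS hpow
    omega
  · rw [h]
    ring

lemma cubeSum_eq_of_card_eq_two_pow {m : ℕ} (hq : Fintype.card F = 2 ^ m) :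
    cubeSum F = -traceOfFrobenius m := by
  rw [traceOfFrobenius]
  split_ifs with hm
  · obtain ⟨k, rfl⟩ := hm
    rw [← two_mul, pow_mul] at hq
    rw [cubeSum_eq_of_card_eq_four_pow hq, ← two_mul, Nat.mul_div_cancel_left k two_pos]
    ring
  · rw [cubeSum_eq_zero (by rwa [hq, three_dvd_two_pow_sub_one_iff]), neg_zero]

end ArtinSchreier

section SupersingularCurve

variable {F : Type*} [Field F] [CharP F 2]

lemma nonsingular_iff_sq_add_self_eq_cube (x y : F) :
    (toAffine ⟨0, 0, 1, 0, 0⟩ : Affine F).Nonsingular x y ↔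
      y ^ 2 + y = x ^ 3 := by
  have h2 : (2 : F) = 0 := CharTwo.two_eq_zero
  rw [Affine.nonsingular_iff, Affine.equation_iff]
  have hy : y ≠ -y - 1 := fun h => one_ne_zero (by linear_combination h - y * h2)
  simp [hy]

variable [Fintype F] [DecidableEq F] in
lemma natCard_point_eq_card_add_one_add_cubeSum :
    (Nat.card (toAffine ⟨0, 0, 1, 0, 0⟩ : Affine F).Point : ℤ) =
      Fintype.card F + 1 + cubeSum F := by
  -- `WithZero α` is `Option α` by definition
  rw [Nat.card_congr ((Affine.nonsingularPointEquiv _).trans (.refl (Option _))),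
    Finite.card_option, Nat.card_congr (Equiv.subtypeEquivRight fun xy : F × F =>
      nonsingular_iff_sq_add_self_eq_cube xy.1 xy.2),
    Nat.card_congr (Equiv.subtypeProdEquivSigmaSubtype fun x y : F => y ^ 2 + y = x ^ 3),
    Nat.card_sigma]
  simp_rw [Nat.card_eq_fintype_card, Fintype.card_subtype]
  push_cast
  simp_rw [card_filter_sq_add_self_eq, sum_add_distrib, cubeSum]
  simp only [sum_const, card_univ, Int.nsmul_eq_mul, mul_one]
  ring

end SupersingularCurve

/-- The elliptic curve `𝓔 : y² + y = x³` over `F₂` satisfies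
`#𝓔(F_{2^m}) = 2^m + 1 − (√2 i)^m − (−√2 i)^m` for every positive integer `m`
(points counted including the point at infinity). In particular, for `m` even this number is
`2^m + 1 − 2(−2)^{m/2}`, and for `m` odd it is `2^m + 1`. -/
theorem point_count_supersingular_curve (m : ℕ) (hm : 0 < m)
    (W : WeierstrassCurve (GaloisField 2 m))
    (hW : W = { a₁ := 0, a₂ := 0, a₃ := 1, a₄ := 0, a₆ := 0 }) :
    ((Nat.card W.toAffine.Point : ℂ) =
      2 ^ m + 1 - (Real.sqrt 2 * Complex.I) ^ m - (-(Real.sqrt 2 * Complex.I)) ^ m) ∧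
    (Even m → (Nat.card W.toAffine.Point : ℤ) = 2 ^ m + 1 - 2 * (-2 : ℤ) ^ (m / 2)) ∧
    (Odd m → Nat.card W.toAffine.Point = 2 ^ m + 1) := by
  subst hW
  have := Fintype.ofFinite (GaloisField 2 m)
  classical
  have hq : Fintype.card (GaloisField 2 m) = 2 ^ m := by
    rw [← Nat.card_eq_fintype_card, GaloisField.card 2 m hm.ne']
  have hN : (Nat.card (toAffine ⟨0, 0, 1, 0, 0⟩ : Affine (GaloisField 2 m)).Point : ℤ) =
      2 ^ m + 1 - traceOfFrobenius m := by
    rw [natCard_point_eq_card_add_one_add_cubeSum, cubeSum_eq_of_card_eq_two_pow hq, hq]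
    push_cast
    ring
  refine ⟨?_, fun h => by rw [hN, traceOfFrobenius, if_pos h], fun h => ?_⟩
  · rw [sub_sub, sqrt_two_mul_I_pow_add_neg_pow]
    exact_mod_cast hN
  · rw [traceOfFrobenius, if_neg (Nat.not_even_iff_odd.2 h), sub_zero] at hN
    exact_mod_cast hN
end

section
/- Let q = 2^f with f odd, k₂ = F_{q²}, χ a nontrivial character of k₂×/(k₂×)³ (a nontrivial cubic character of k₂×), and ψ(x) = (−1)^{Tr_{k₂/F₂}(x)} the canonical additive character. Then the normalized Gauss sum q^{−1} Σ_{x∈k₂×} χ(x)^{−1} ψ(x) equals 1. -/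
/-!
Put `G = g(χ⁻¹, ψ)`. The absolute Frobenius `x ↦ x²` fixes `ψ` and turns `χ` into
`χ² = χ⁻¹`, so `g(χ, ψ) = G` as well; since `ψ⁻¹ = ψ` in characteristic 2, the identity
`g(χ, ψ) g(χ⁻¹, ψ⁻¹) = |k₂|` gives `G² = q²`. As `ψ` is `±1`-valued and `1 + c + c² = 3·[c = 1]`
for every cube root of unity `c`, `2G = g(χ, ψ) + g(χ², ψ) = 3A + 1` with `A ∈ ℤ`. Now
`2q = 2^(f+1) ≡ 1 (mod 3)` for odd `f`, so `2G ≡ 1 (mod 3)` rules out `G = -q`.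
-/

open Finset

theorem one_add_add_sq_of_pow_three_eq_one {R : Type*} [CommRing R] [IsDomain R] [DecidableEq R]
    {c : R} (hc : c ^ 3 = 1) : 1 + c + c ^ 2 = if c = 1 then 3 else 0 := by
  split_ifs with h
  · subst h
    norm_num
  · have hfactor : (c - 1) * (1 + c + c ^ 2) = 0 := by linear_combination hc
    exact (mul_eq_zero.mp hfactor).resolve_left (sub_ne_zero.mpr h)

theorem eq_two_pow_of_sq_eq_of_two_mul_eq {R : Type*} [CommRing R] [IsDomain R] [CharZero R]
    {f : ℕ} (hf : Odd f) {G : R} (hsq : G ^ 2 = (2 ^ f) ^ 2) {n : ℤ} (h : 2 * G = 3 * n + 1) :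
    G = 2 ^ f := by
  refine (sq_eq_sq_iff_eq_or_eq_neg.mp hsq).resolve_right fun hneg => ?_
  obtain ⟨m, rfl⟩ := hf
  have hint : -(2 : ℤ) ^ (2 * (m + 1)) = 3 * n + 1 := by
    apply Int.cast_injective (α := R)
    push_cast
    rw [← h, hneg]
    ring
  have hmod : (2 : ℤ) ^ (2 * (m + 1)) ≡ 1 [ZMOD 3] := by
    simpa [pow_mul] using (show (2 ^ 2 : ℤ) ≡ 1 [ZMOD 3] by decide).pow (m + 1)
  rw [Int.ModEq] at hmod
  omega

theorem AddChar.inv_eq_self_of_charTwo {R R' : Type*} [Ring R] [CharP R 2] [CommMonoid R']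
    (ψ : AddChar R R') : ψ⁻¹ = ψ := by
  ext x
  rw [AddChar.inv_apply, CharTwo.neg_eq]

theorem gaussSum_eq_sum_units {R R' : Type*} [CommRing R] [Fintype R] [DecidableEq R]
    [CommRing R'] (χ : MulChar R R') (ψ : AddChar R R') :
    gaussSum χ ψ = ∑ u : Rˣ, χ u * ψ u :=
  (Fintype.sum_of_injective _ Units.val_injective _ _
    (fun a ha => by rw [χ.map_nonunit fun hu => ha ⟨hu.unit, rfl⟩, zero_mul]) fun _ => rfl).symm

theorem gaussSum_pow_char_eq {K R : Type*} [Field K] [Fintype K] [CommRing R] (p : ℕ)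
    [Fact p.Prime] [CharP K p] (χ : MulChar K R) {ψ : AddChar K R} (hψ : ∀ x, ψ (x ^ p) = ψ x) :
    gaussSum (χ ^ p) ψ = gaussSum χ ψ := by
  rw [gaussSum, gaussSum, ← (frobeniusEquiv K p).toEquiv.sum_comp (fun x => χ x * ψ x)]
  refine sum_congr rfl fun x _ => ?_
  simp [MulChar.pow_apply' χ (Fact.out : p.Prime).ne_zero, frobenius_def, hψ]

theorem gaussSum_add_gaussSum_sq_eq {K R : Type*} [Field K] [Fintype K] [DecidableEq K]
    [CommRing R] [IsDomain R] [DecidableEq R] {χ : MulChar K R} (hχ : χ ^ 3 = 1)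
    {s : AddChar K ℤ} (hs : s ≠ 1) :
    gaussSum χ ((Int.castRingHom R : ℤ →* R).compAddChar s) +
        gaussSum (χ ^ 2) ((Int.castRingHom R : ℤ →* R).compAddChar s) =
      3 * ((∑ a with χ a = 1, s a : ℤ) : R) + 1 := by
  set ψ := (Int.castRingHom R : ℤ →* R).compAddChar s
  have hψ : ∀ a, ψ a = s a := fun _ => rfl
  have hψsum : ∑ a, ψ a = 0 := by
    simp only [hψ, ← Int.cast_sum, AddChar.sum_eq_zero_of_ne_one hs, Int.cast_zero]
  have hvalue (a : K) :
      χ a + (χ ^ 2) a + 1 = (if a = 0 then 1 else 0) + if χ a = 1 then 3 else 0 := by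
    by_cases ha : a = 0
    · subst ha
      simp [MulChar.map_zero]
    · have hcube : χ a ^ 3 = 1 := by
        rw [← MulChar.pow_apply' χ three_ne_zero, hχ,
          MulChar.one_apply (isUnit_iff_ne_zero.mpr ha)]
      rw [MulChar.pow_apply' χ two_ne_zero, if_neg ha, zero_add,
        ← one_add_add_sq_of_pow_three_eq_one hcube]
      ring
  calc gaussSum χ ψ + gaussSum (χ ^ 2) ψ = ∑ a, (χ a + (χ ^ 2) a + 1) * ψ a - ∑ a, ψ a := by
        simp only [gaussSum, add_mul, one_mul, sum_add_distrib, add_sub_cancel_right]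
    _ = ∑ a, ((if a = 0 then 1 else 0) + if χ a = 1 then 3 else 0) * ψ a := by
        simp only [hψsum, sub_zero, hvalue]
    _ = 3 * ((∑ a with χ a = 1, s a : ℤ) : R) + 1 := by
        simp [add_mul, sum_add_distrib, ite_mul, sum_filter, mul_sum, hψ, add_comm]

section CharTwo

variable (K : Type*) [Field K] [Algebra (ZMod 2) K]

/-- Valued in `ℤ` so that sums of its values are visibly integers. -/
noncomputable def traceSignChar : AddChar K ℤ where
  toFun x := if Algebra.trace (ZMod 2) K x = 0 then 1 else -1
  map_zero_eq_one' := by simp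
  map_add_eq_mul' x y := by
    rw [map_add]
    generalize Algebra.trace (ZMod 2) K x = a
    generalize Algebra.trace (ZMod 2) K y = b
    fin_cases a <;> fin_cases b <;> rfl

variable {K}

theorem traceSignChar_apply (x : K) :
    traceSignChar K x = if Algebra.trace (ZMod 2) K x = 0 then 1 else -1 := rfl

theorem traceSignChar_sq [Finite K] (x : K) : traceSignChar K (x ^ 2) = traceSignChar K x := by
  have htrace :=
    Algebra.trace_eq_of_algEquiv (FiniteField.frobeniusAlgEquivOfAlgebraic (ZMod 2) K) x
  rw [FiniteField.coe_frobeniusAlgEquivOfAlgebraic, ZMod.card] at htrace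
  rw [traceSignChar_apply, traceSignChar_apply, htrace]

theorem traceSignChar_ne_one [Finite K] : traceSignChar K ≠ 1 := by
  obtain ⟨x, hx⟩ := Algebra.trace_surjective (ZMod 2) K 1
  refine AddChar.ne_one_iff.mpr ⟨x, ?_⟩
  simp [traceSignChar_apply, hx]

theorem gaussSum_traceSignChar_eq_two_pow {R : Type*} [Fintype K] [CommRing R] [IsDomain R]
    [CharZero R] {f : ℕ} (hf : Odd f) (hcard : Fintype.card K = (2 ^ f) ^ 2)
    {χ : MulChar K R} (hχ3 : χ ^ 3 = 1) (hχ : χ ≠ 1) :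
    gaussSum χ ((Int.castRingHom R : ℤ →* R).compAddChar (traceSignChar K)) = 2 ^ f := by
  classical
  have : CharP K 2 := charP_of_injective_algebraMap' (ZMod 2) 2
  set ψ := (Int.castRingHom R : ℤ →* R).compAddChar (traceSignChar K)
  have hinv : χ⁻¹ = χ ^ 2 := inv_eq_of_mul_eq_one_right (by rw [← pow_succ', hχ3])
  have hfrob : gaussSum (χ ^ 2) ψ = gaussSum χ ψ :=
    gaussSum_pow_char_eq 2 χ fun x => by simp [ψ, traceSignChar_sq]
  have hψ : ψ.IsPrimitive :=
    (AddChar.IsPrimitive.of_ne_one traceSignChar_ne_one).compMulHom_of_isPrimitive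
      Int.cast_injective
  have hsq : gaussSum χ ψ ^ 2 = (2 ^ f) ^ 2 := by
    have hcard_eq := gaussSum_mul_gaussSum_eq_card hχ hψ
    rw [AddChar.inv_eq_self_of_charTwo, hinv, hfrob, hcard, ← sq] at hcard_eq
    exact_mod_cast hcard_eq
  have hsum := gaussSum_add_gaussSum_sq_eq hχ3 (traceSignChar_ne_one (K := K))
  rw [hfrob, ← two_mul] at hsum
  exact eq_two_pow_of_sq_eq_of_two_mul_eq hf hsq hsum

end CharTwo

/-- Let `q = 2^f` with `f` odd, `k₂ = F_{q²}`, `χ` a nontrivial cubic character of `k₂ˣ`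
(i.e. a nontrivial character of `k₂ˣ/(k₂ˣ)³`), and `ψ(x) = (−1)^{Tr_{k₂/F₂}(x)}` the canonical
additive character. Then the normalized Gauss sum `q⁻¹ ∑_{x ∈ k₂ˣ} χ(x)⁻¹ ψ(x)` equals `1`. -/
theorem gauss_sum_cubic_char (f : ℕ) (hf : Odd f) (k₂ : Type*) [Field k₂] [Fintype k₂] [DecidableEq k₂]
    [Algebra (ZMod 2) k₂] (hcard : Fintype.card k₂ = (2 ^ f) ^ 2)
    (χ : k₂ˣ →* ℂˣ) (hχ3 : χ ^ 3 = 1) (hχ : χ ≠ 1)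
    (ψ : k₂ → ℂ)
    (hψ : ∀ x : k₂, ψ x = if Algebra.trace (ZMod 2) k₂ x = 0 then 1 else -1) :
    ((2 : ℂ) ^ f)⁻¹ * ∑ x : k₂ˣ, ((χ x : ℂ))⁻¹ * ψ (x : k₂) = 1 := by
  have hχ'3 : MulChar.ofUnitHom χ⁻¹ ^ 3 = 1 := by
    rw [MulChar.ofUnitHom_eq, ← MulChar.mulEquivToUnitHom_symm_apply, ← map_pow, inv_pow, hχ3,
      inv_one, map_one]
  have hχ' : MulChar.ofUnitHom χ⁻¹ ≠ 1 := by
    rw [MulChar.ofUnitHom_eq, ← MulChar.mulEquivToUnitHom_symm_apply, ne_eq,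
      MulEquiv.map_eq_one_iff, inv_eq_one]
    exact hχ
  have hψ' : ψ = (Int.castRingHom ℂ : ℤ →* ℂ).compAddChar (traceSignChar k₂) := by
    ext x
    simp [hψ x, traceSignChar_apply, apply_ite (Int.cast : ℤ → ℂ)]
  have hG : ∑ x : k₂ˣ, ((χ x : ℂ))⁻¹ * ψ (x : k₂) =
      gaussSum (MulChar.ofUnitHom χ⁻¹)
        ((Int.castRingHom ℂ : ℤ →* ℂ).compAddChar (traceSignChar k₂)) := by
    simp [gaussSum_eq_sum_units, hψ']
  rw [hG, gaussSum_traceSignChar_eq_two_pow hf hcard hχ'3 hχ', inv_mul_cancel₀ (by norm_num)]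
end
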